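/- Under the hypotheses of the previous pole-expansion system, if α q̇ + 2β = 0, α̇ + αv + 2γ = 0, and β̇ + vβ − γ q̇ + αw = 0 hold with α nowhere zero, then q̈ = 2w. -/

import Mathlib

/-! Differentiating `α q̇ + 2β = 0` gives `α̇ q̇ + α q̈ + 2β̇ = 0`. Eliminating `α̇` with the second
equation and `β̇` with the third, the terms in `v` and `γ` cancel up to a multiple of the first
equation, leaving `α (q̈ − 2w) = 0`; since `α` does not vanish, `q̈ = 2w`. -/

theorem deriv_mul_add_two_mul_eq_zero {𝕜 𝔸 : Type*} [NontriviallyNormedField 𝕜]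
    [NormedCommRing 𝔸] [NormedAlgebra 𝕜 𝔸] {f g h : 𝕜 → 𝔸} {t : 𝕜}
    (hf : DifferentiableAt 𝕜 f t) (hg : DifferentiableAt 𝕜 g t) (hh : DifferentiableAt 𝕜 h t)
    (H : ∀ s, f s * g s + 2 * h s = 0) :
    deriv f t * g t + f t * deriv g t + 2 * deriv h t = 0 := by
  have hconst : (fun s => f s * g s + 2 * h s) = fun _ => 0 := funext H
  calc deriv f t * g t + f t * deriv g t + 2 * deriv h t
      = deriv (fun s => f s * g s + 2 * h s) t := by
        rw [deriv_fun_add (hf.fun_mul hg) (hh.const_mul 2), deriv_fun_mul hf hg, deriv_const_mul 2 hh]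
    _ = 0 := by rw [hconst, deriv_const]

theorem stmt_1_general
    (q v w α β γ : ℝ → ℂ)
    (hq' : Differentiable ℝ (deriv q))
    (hα : Differentiable ℝ α) (hβ : Differentiable ℝ β)
    (hα0 : ∀ t, α t ≠ 0)
    (h1 : ∀ t, α t * deriv q t + 2 * β t = 0)
    (h2 : ∀ t, deriv α t + α t * v t + 2 * γ t = 0)
    (h3 : ∀ t, deriv β t + v t * β t - γ t * deriv q t + α t * w t = 0) :
    ∀ t, deriv (deriv q) t = 2 * w t := by
  intro t
  have hdiff := deriv_mul_add_two_mul_eq_zero (hα t) (hq' t) (hβ t) h1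
  refine mul_left_cancel₀ (hα0 t) ?_
  linear_combination hdiff - deriv q t * h2 t - 2 * h3 t + v t * h1 t

/-- From the pole-expansion system `αq̇ + 2β = 0`, `α̇ + αv + 2γ = 0`,
`β̇ + vβ − γq̇ + αw = 0` with `α` nowhere zero, one deduces `q̈ = 2w`. -/
theorem stmt_1
    (q v w α β γ : ℝ → ℂ)
    (hq : Differentiable ℝ q) (hq' : Differentiable ℝ (deriv q))
    (hα : Differentiable ℝ α) (hβ : Differentiable ℝ β)
    (hα0 : ∀ t, α t ≠ 0)
    (h1 : ∀ t, α t * deriv q t + 2 * β t = 0)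
    (h2 : ∀ t, deriv α t + α t * v t + 2 * γ t = 0)
    (h3 : ∀ t, deriv β t + v t * β t - γ t * deriv q t + α t * w t = 0) :
    ∀ t, deriv (deriv q) t = 2 * w t :=
  stmt_1_general q v w α β γ hq' hα hβ hα0 h1 h2 h3
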